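/- arXiv:2307.08826 — 5 statements merged into one kernel-verified Lean document; each statement's English description precedes it below -/
import Mathlib

section
/- Let C be an integer m×n matrix with m ≤ n and let V be an n×n unimodular integer matrix (|det V| = 1). Then the greatest common divisor of all m×m subdeterminants (maximal minors) of CV equals the greatest common divisor of all m×m subdeterminants of C. -/
open Matrix Finset Equiv

/-- The GCD of all `m × m` subdeterminants (maximal minors) of an `m × n` integer matrix. -/
noncomputable def gcdMinors {m n : ℕ} (C : Matrix (Fin m) (Fin n) ℤ) : ℕ :=
  Finset.univ.gcd (fun e : Fin m ↪ Fin n => ((C.submatrix id e).det).natAbs)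

/-- Cauchy–Binet-lite: determinant of a rectangular product as a sum. -/
lemma det_rect_mul {m n : ℕ} (C : Matrix (Fin m) (Fin n) ℤ) (B : Matrix (Fin n) (Fin m) ℤ) :
    (C * B).det = ∑ r : Fin m → Fin n,
      (∏ i, B (r i) i) * (C.submatrix id r).det := by
  calc (C * B).det
      = ∑ r : Fin m → Fin n, ∑ σ : Perm (Fin m),
          (Perm.sign σ : ℤ) * ∏ i, C (σ i) (r i) * B (r i) i := by
        simp only [det_apply', mul_apply, Finset.prod_univ_sum, Finset.mul_sum,
          Fintype.piFinset_univ]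
        rw [Finset.sum_comm]
        push_cast
        rfl
    _ = _ := by
        refine Finset.sum_congr rfl fun r _ => ?_
        rw [det_apply', Finset.mul_sum]
        refine Finset.sum_congr rfl fun σ _ => ?_
        simp only [submatrix_apply, id_eq, Finset.prod_mul_distrib]
        push_cast
        ring

lemma gcdMinors_dvd_det_mul {m n : ℕ} (C : Matrix (Fin m) (Fin n) ℤ)
    (B : Matrix (Fin n) (Fin m) ℤ) : (gcdMinors C : ℤ) ∣ (C * B).det := by
  rw [det_rect_mul]
  refine Finset.dvd_sum fun r _ => Dvd.dvd.mul_left ?_ _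
  by_cases hr : Function.Injective r
  · have h : gcdMinors C ∣ ((C.submatrix id (⟨r, hr⟩ : Fin m ↪ Fin n)).det).natAbs :=
      Finset.gcd_dvd (f := fun e : Fin m ↪ Fin n => ((C.submatrix id e).det).natAbs)
        (Finset.mem_univ _)
    exact Int.dvd_natAbs.mp (Int.natCast_dvd_natCast.mpr h)
  · obtain ⟨i, j, hij, hne⟩ : ∃ i j, r i = r j ∧ i ≠ j := by
      simp only [Function.Injective] at hr; push_neg at hr
      obtain ⟨i, j, h1, h2⟩ := hr; exact ⟨i, j, h1, h2⟩
    rw [Matrix.det_zero_of_column_eq hne (fun k => by simp [hij])]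
    exact dvd_zero _

lemma gcdMinors_mul_dvd {m n : ℕ} (C : Matrix (Fin m) (Fin n) ℤ)
    (B : Matrix (Fin n) (Fin n) ℤ) : gcdMinors C ∣ gcdMinors (C * B) := by
  refine Finset.dvd_gcd fun e _ => ?_
  have key : ((C * B).submatrix id e) = C * (B.submatrix id e) := by
    ext i j; simp [mul_apply]
  rw [key]
  exact Int.natAbs_dvd_natAbs.mpr (by simpa using gcdMinors_dvd_det_mul C (B.submatrix id e))

theorem stmt3 {m n : ℕ} (hmn : m ≤ n) (C : Matrix (Fin m) (Fin n) ℤ)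
    (V : Matrix (Fin n) (Fin n) ℤ) (hV : V.det = 1 ∨ V.det = -1) :
    gcdMinors (C * V) = gcdMinors C := by
  have hdet : V.det * V.det = 1 := by rcases hV with h | h <;> simp [h]
  set W := V.det • V.adjugate with hW
  have hVW : V * W = 1 := by
    rw [hW, Matrix.mul_smul, Matrix.mul_adjugate, smul_smul, hdet, one_smul]
  have hC : C * V * W = C := by rw [Matrix.mul_assoc, hVW, Matrix.mul_one]
  refine Nat.dvd_antisymm ?_ (gcdMinors_mul_dvd C V)
  have := gcdMinors_mul_dvd (C * V) W
  rwa [hC] at this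
end

section
/- (Jacobi's theorem) Let A be an n×n real matrix with classical adjoint A* (the adjugate, whose (i,j) entry is the cofactor of a_{ji}). Let σ be a permutation pairing {1,...,n} as (i_1,...,i_n) ↦ (j_1,...,j_n), let 1 ≤ p ≤ n, I = {i_1,...,i_p}, J = {j_1,...,j_p}, I' = {i_{p+1},...,i_n}, J' = {j_{p+1},...,j_n}. Then det(A*_{I×J}) = sgn(σ) · det(A_{J'×I'}) · det(A)^{p-1}. -/
/-!
Reorder rows by `j` and columns by `i`, so that `A' := A_{J∪J', I∪I'}` and
`C := (adj A)_{I∪I', J∪J'}` satisfy `A' C = det A • 1`. Multiplying `A'` by the block matrix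
`[[C₁₁, 0], [C₂₁, 1]]` gives `[[det A • 1, A'₁₂], [0, A'₂₂]]`, whence
`det A' · det C₁₁ = (det A)^p · det A'₂₂`, and `det A' = sgn σ · det A`. Dividing by `det A` is
legitimate for the generic matrix over `ℤ[x_ij]`, and the identity then specialises to every
matrix over a commutative ring.
-/

open Matrix Equiv

namespace Matrix

variable {l m k n R : Type*} [Fintype l] [DecidableEq l] [Fintype m] [Fintype k] [Fintype n]
  [DecidableEq m] [DecidableEq k] [DecidableEq n] [CommRing R]

theorem det_submatrix_equiv (A : Matrix n n R) (e f : l ≃ n) :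
    (A.submatrix f e).det = Perm.sign (e.symm.trans f) * A.det := by
  have : A.submatrix f e = (A.submatrix (e.symm.trans f) id).submatrix e e := by
    ext; simp
  rw [this, det_submatrix_equiv_self, det_permute]

theorem det_mul_det_toBlocks₁₁_of_mul_eq_smul_one {M N : Matrix (m ⊕ k) (m ⊕ k) R} {d : R}
    (h : M * N = d • 1) :
    M.det * N.toBlocks₁₁.det = d ^ Fintype.card m * M.toBlocks₂₂.det := by
  have hblocks := h
  rw [← fromBlocks_toBlocks N, ← fromBlocks_toBlocks M, fromBlocks_multiply,
    ← fromBlocks_one, fromBlocks_smul, fromBlocks_inj, smul_zero] at hblocks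
  obtain ⟨h₁₁, -, h₂₁, -⟩ := hblocks
  have hprod : M * fromBlocks N.toBlocks₁₁ 0 N.toBlocks₂₁ 1 =
      fromBlocks (d • 1) M.toBlocks₁₂ 0 M.toBlocks₂₂ := by
    conv_lhs => rw [← fromBlocks_toBlocks M, fromBlocks_multiply]
    simp [h₁₁, h₂₁]
  simpa [det_fromBlocks_zero₁₂, det_fromBlocks_zero₂₁, det_smul] using congrArg det hprod

theorem det_mul_det_submatrix_adjugate (A : Matrix n n R) (e f : m ⊕ k ≃ n) :
    A.det * (A.adjugate.submatrix (e ∘ Sum.inl) (f ∘ Sum.inl)).det =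
      Perm.sign (e.symm.trans f) * (A.submatrix (f ∘ Sum.inr) (e ∘ Sum.inr)).det *
        A.det ^ Fintype.card m := by
  have hmul : A.submatrix f e * A.adjugate.submatrix e f = A.det • 1 := by
    rw [submatrix_mul_equiv, mul_adjugate, smul_one_eq_diagonal, submatrix_diagonal_equiv]
    exact (smul_one_eq_diagonal _).symm
  have key := det_mul_det_toBlocks₁₁_of_mul_eq_smul_one hmul
  rw [det_submatrix_equiv] at key
  set s : R := ((Perm.sign (e.symm.trans f) : ℤ) : R)
  have hs : s * s = 1 := by
    simp only [s, ← Int.cast_mul, ← Units.val_mul, Int.units_mul_self, Units.val_one,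
      Int.cast_one]
  calc _ = s * (s * A.det * (A.adjugate.submatrix e f).toBlocks₁₁.det) := by
        rw [← mul_assoc, ← mul_assoc, hs, one_mul]; rfl
    _ = s * (A.submatrix f e).toBlocks₂₂.det * A.det ^ Fintype.card m := by rw [key]; ring
    _ = _ := rfl

theorem det_submatrix_adjugate [Nonempty m] (A : Matrix n n R) (e f : m ⊕ k ≃ n) :
    (A.adjugate.submatrix (e ∘ Sum.inl) (f ∘ Sum.inl)).det =
      Perm.sign (e.symm.trans f) * (A.submatrix (f ∘ Sum.inr) (e ∘ Sum.inr)).det *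
        A.det ^ (Fintype.card m - 1) := by
  let X := mvPolynomialX n n ℤ
  suffices hX : (X.adjugate.submatrix (e ∘ Sum.inl) (f ∘ Sum.inl)).det =
      Perm.sign (e.symm.trans f) * (X.submatrix (f ∘ Sum.inr) (e ∘ Sum.inr)).det *
        X.det ^ (Fintype.card m - 1) by
    let φ := (MvPolynomial.aeval (R := ℤ) fun p : n × n => A p.1 p.2).toRingHom
    have hφ : φ.mapMatrix X = A := mvPolynomialX_mapMatrix_aeval ℤ A
    rw [← hφ, ← RingHom.map_adjugate]
    simpa only [RingHom.map_det, map_mul, map_pow, map_intCast, RingHom.mapMatrix_apply,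
      ← submatrix_map] using congrArg φ hX
  apply mul_left_cancel₀ (det_mvPolynomialX_ne_zero n ℤ)
  rw [det_mul_det_submatrix_adjugate, mul_left_comm, ← pow_succ',
    Nat.sub_add_cancel Fintype.card_pos]

end Matrix

/-- Jacobi's theorem on minors of the adjugate: if `σ` is the permutation sending
`i r ↦ j r`, `I = {i 1, ..., i p}`, `J = {j 1, ..., j p}`, `I' = {i (p+1), ..., i n}`,
`J' = {j (p+1), ..., j n}`, then
`det (adj A)_{I×J} = sgn σ · det A_{J'×I'} · (det A)^(p-1)`. -/
theorem stmt6 {n p : ℕ} (hp1 : 1 ≤ p) (hpn : p ≤ n) (A : Matrix (Fin n) (Fin n) ℝ)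
    (i j : Equiv.Perm (Fin n)) :
    ((A.adjugate).submatrix (fun r : Fin p => i (Fin.castLE hpn r))
        (fun r : Fin p => j (Fin.castLE hpn r))).det =
      ((Equiv.Perm.sign (j * i⁻¹) : ℤ) : ℝ) *
        (A.submatrix (fun r : Fin (n - p) => j ⟨p + r.1, by have := r.2; omega⟩)
          (fun r : Fin (n - p) => i ⟨p + r.1, by have := r.2; omega⟩)).det *
        A.det ^ (p - 1) := by
  have : Nonempty (Fin p) := ⟨⟨0, hp1⟩⟩
  let E : Fin p ⊕ Fin (n - p) ≃ Fin n := finSumFinEquiv.trans (finCongr (by omega))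
  have hsign : (E.trans i).symm.trans (E.trans j) = j * i⁻¹ := by ext; simp
  have key := det_submatrix_adjugate A (E.trans i) (E.trans j)
  rw [hsign, Fintype.card_fin] at key
  have hE_inl (r : Fin p) : E (Sum.inl r) = Fin.castLE hpn r := Fin.ext rfl
  have hE_inr (r : Fin (n - p)) : E (Sum.inr r) = ⟨p + r.1, by omega⟩ := Fin.ext rfl
  simpa only [Function.comp_def, Equiv.trans_apply, hE_inl, hE_inr] using key
end

section
/- Let A be an m×n integer matrix with integrally independent columns, with Hermite normal form AU = (D 0) where U = (U_1 U_2) is unimodular. Then for each row i of U_2 ∈ Z^{n×(n-m)}, there exists a prime q_i ≥ 2 dividing every entry (U_2)_{ij}, j = 1,...,n-m. -/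
/-- Vectors are integrally independent if none is an integer linear combination
of the others. -/
def IntegrallyIndependent {ι α : Type*} [Fintype ι] [DecidableEq ι] (a : ι → α → ℤ) : Prop :=
  ¬ ∃ (k : ι) (μ : ι → ℤ), a k = ∑ i ∈ Finset.univ.erase k, μ i • a i

/- A row of `U₂` is either divisible by a prime, or by Bézout it combines to `1`, and the same
combination of the columns of `U₂` is an integer kernel vector of `A` with an entry `1`, which
integral independence of the columns of `A` forbids. -/

open Matrix

theorem IntegrallyIndependent.ne_one_of_mulVec_eq_zero {α ι : Type*} [Fintype ι] [DecidableEq ι]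
    {A : Matrix α ι ℤ} (hA : IntegrallyIndependent (fun c i => A i c)) {x : ι → ℤ}
    (hx : A *ᵥ x = 0) (k : ι) : x k ≠ 1 := by
  intro hxk
  refine hA ⟨k, -x, funext fun p => ?_⟩
  have hp : A p k * x k + ∑ c ∈ Finset.univ.erase k, A p c * x c = 0 := by
    rw [Finset.add_sum_erase _ (fun c => A p c * x c) (Finset.mem_univ k)]
    exact congrFun hx p
  rw [hxk, mul_one] at hp
  simp only [Finset.sum_apply, Pi.smul_apply, Pi.neg_apply, smul_eq_mul, neg_mul,
    Finset.sum_neg_distrib, mul_comm (x _)]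
  omega

theorem Int.exists_prime_dvd_or_sum_mul_eq_one {ι : Type*} [Fintype ι] (f : ι → ℤ) :
    (∃ q : ℕ, q.Prime ∧ ∀ j, (q : ℤ) ∣ f j) ∨ ∃ c : ι → ℤ, ∑ j, f j * c j = 1 := by
  obtain ⟨c, hc⟩ := Finset.gcd_eq_sum_mul Finset.univ f
  set g := Finset.univ.gcd f
  by_cases hg : g.natAbs = 1
  · have hgg : g * g = 1 := by rw [← Int.natAbs_mul_self, hg]; rfl
    refine .inr ⟨fun j => c j * g, ?_⟩
    simp only [← mul_assoc, ← Finset.sum_mul, ← hc, hgg]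
  · -- `Nat.minFac 0 = 2`, so the case of a zero row needs no separate treatment.
    refine .inl ⟨g.natAbs.minFac, Nat.minFac_prime hg, fun j => ?_⟩
    exact (Int.natCast_dvd.mpr (Nat.minFac_dvd _)).trans (Finset.gcd_dvd (Finset.mem_univ j))

theorem Matrix.mulVec_mulVec_sumElim_zero_of_mul_eq_fromCols_zero {l m n R : Type*}
    [Fintype m] [Fintype n] [Semiring R] {A : Matrix l (m ⊕ n) R}
    {U : Matrix (m ⊕ n) (m ⊕ n) R} {D : Matrix l m R} (hAU : A * U = fromCols D (0 : Matrix l n R))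
    (c : n → R) :
    A *ᵥ (U *ᵥ Sum.elim 0 c) = 0 := by
  rw [mulVec_mulVec, hAU, fromCols_mulVec_sumElim]
  simp

theorem stmt8_general {m k : ℕ} (A : Matrix (Fin m) (Fin m ⊕ Fin k) ℤ)
    (hInd : IntegrallyIndependent (fun c i => A i c))
    (U : Matrix (Fin m ⊕ Fin k) (Fin m ⊕ Fin k) ℤ)
    (D : Matrix (Fin m) (Fin m) ℤ)
    (hHNF : A * U = Matrix.fromCols D 0) :
    ∀ i : Fin m ⊕ Fin k, ∃ q : ℕ, q.Prime ∧ ∀ j : Fin k, (q : ℤ) ∣ U i (Sum.inr j) := by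
  intro i
  refine (Int.exists_prime_dvd_or_sum_mul_eq_one fun j => U i (Sum.inr j)).resolve_right ?_
  rintro ⟨c, hc⟩
  refine hInd.ne_one_of_mulVec_eq_zero
    (mulVec_mulVec_sumElim_zero_of_mul_eq_fromCols_zero hHNF c) i ?_
  simpa [mulVec, dotProduct, Fintype.sum_sum_type] using hc

/-- If `A` has integrally independent columns with Hermite normal form `A * U = (D 0)`,
`U` unimodular, then every row of `U₂` (the last `k = n - m` columns of `U`) is divisible
by some prime `q ≥ 2`. -/
theorem stmt8 {m k : ℕ} (A : Matrix (Fin m) (Fin m ⊕ Fin k) ℤ)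
    (hInd : IntegrallyIndependent (fun c i => A i c))
    (U : Matrix (Fin m ⊕ Fin k) (Fin m ⊕ Fin k) ℤ) (hU : U.det = 1 ∨ U.det = -1)
    (D : Matrix (Fin m) (Fin m) ℤ) (hD : ∀ i j : Fin m, (i : ℕ) < (j : ℕ) → D i j = 0)
    (hHNF : A * U = Matrix.fromCols D 0) :
    ∀ i : Fin m ⊕ Fin k, ∃ q : ℕ, q.Prime ∧ ∀ j : Fin k, (q : ℤ) ∣ U i (Sum.inr j) :=
  stmt8_general A hInd U D hHNF
end

section
/- Let p_1 < p_2 < ... < p_k be the first k primes, let m ≥ 1, n = km, and define A ∈ Z^{m×n} by A_{ij} = (p_1 p_2 ··· p_k)/p_r if j = (i-1)k + r for some 1 ≤ r ≤ k, and A_{ij} = 0 otherwise. Let b = A·1 (the sum of all columns). Then every integer solution x of Ax = b has all n entries nonzero. -/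
/-!
Fix a row `i` and write `c_r = (p₁ ⋯ p_k) / p_r`. Row `i` of `A x = A 1` reads
`∑_r c_r (x_{i,r} - 1) = 0`. Every `c_s` with `s ≠ r` is divisible by `p_r`, so `p_r` divides
`c_r (x_{i,r} - 1)`; since `p_r ∤ c_r`, it divides `x_{i,r} - 1`. Thus `x_{i,r} ≡ 1 (mod p_r)`,
and in particular `x_{i,r} ≠ 0`.
-/

/-- The block matrix `A ∈ ℤ^{m × km}` (columns indexed by pairs `(i, r)`) with
`A_{i,(i,r)} = (p₁ p₂ ⋯ p_k) / p_{r+1}` and zeros elsewhere, where `p` ranges over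
the primes (`Nat.nth Nat.Prime s` is the `(s+1)`-st prime). -/
noncomputable def blockA (m k : ℕ) : Matrix (Fin m) (Fin m × Fin k) ℤ :=
  Matrix.of fun i jr =>
    if jr.1 = i then
      (((∏ s ∈ Finset.range k, Nat.nth Nat.Prime s) / Nat.nth Nat.Prime jr.2.1 : ℕ) : ℤ)
    else 0

open Finset

section PrimeProducts

variable {ι : Type*} [DecidableEq ι] {s : Finset ι} {p : ι → ℕ} {r : ι}

lemma Nat.prod_div_eq_prod_erase (hr : r ∈ s) (hpr : 0 < p r) :
    (∏ i ∈ s, p i) / p r = ∏ i ∈ s.erase r, p i := by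
  rw [← mul_prod_erase s p hr, Nat.mul_div_cancel_left _ hpr]

lemma Nat.Prime.not_dvd_prod_erase (hp : ∀ i ∈ s, (p i).Prime) (hinj : Set.InjOn p s)
    (hr : r ∈ s) : ¬ p r ∣ ∏ i ∈ s.erase r, p i := by
  intro h
  obtain ⟨t, ht, hdvd⟩ := (hp r hr).prime.exists_mem_finset_dvd h
  obtain ⟨htr, hts⟩ := mem_erase.mp ht
  exact htr (hinj hts hr ((Nat.prime_dvd_prime_iff_eq (hp r hr) (hp t hts)).mp hdvd).symm)

end PrimeProducts

lemma dvd_mul_of_sum_mul_eq_zero {ι R : Type*} [Fintype ι] [DecidableEq ι] [CommRing R]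
    {d : R} {c y : ι → R} {r : ι} (hc : ∀ s ≠ r, d ∣ c s) (h : ∑ s, c s * y s = 0) :
    d ∣ c r * y r := by
  rw [← add_sum_erase _ _ (mem_univ r)] at h
  rw [eq_neg_of_add_eq_zero_left h, dvd_neg]
  exact dvd_sum fun s hs => (hc s (ne_of_mem_erase hs)).mul_right _

noncomputable def primeCofactor (k : ℕ) (r : Fin k) : ℕ :=
  (∏ s ∈ range k, Nat.nth Nat.Prime s) / Nat.nth Nat.Prime r

lemma primeCofactor_eq_prod_erase {k : ℕ} (r : Fin k) :
    primeCofactor k r = ∏ s ∈ (range k).erase (r : ℕ), Nat.nth Nat.Prime s :=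
  Nat.prod_div_eq_prod_erase (mem_range.mpr r.2) (Nat.prime_nth_prime r).pos

lemma nth_prime_dvd_primeCofactor {k : ℕ} {r t : Fin k} (h : r ≠ t) :
    Nat.nth Nat.Prime t ∣ primeCofactor k r := by
  rw [primeCofactor_eq_prod_erase]
  exact dvd_prod_of_mem _ (mem_erase.mpr ⟨fun htr => h (Fin.ext htr).symm, mem_range.mpr t.2⟩)

lemma nth_prime_not_dvd_primeCofactor {k : ℕ} (r : Fin k) :
    ¬ Nat.nth Nat.Prime r ∣ primeCofactor k r := by
  rw [primeCofactor_eq_prod_erase]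
  exact Nat.Prime.not_dvd_prod_erase (fun s _ => Nat.prime_nth_prime s)
    (Nat.nth_injective Nat.infinite_setOfPred_prime).injOn (mem_range.mpr r.2)

lemma blockA_mulVec_apply {m k : ℕ} (x : Fin m × Fin k → ℤ) (i : Fin m) :
    (blockA m k).mulVec x i = ∑ r, (primeCofactor k r : ℤ) * x (i, r) := by
  simp only [Matrix.mulVec, dotProduct, blockA, Matrix.of_apply, Fintype.sum_prod_type,
    ite_mul, zero_mul]
  rw [sum_eq_single i (fun j _ hj => sum_eq_zero fun r _ => if_neg hj) (by simp)]
  simp [primeCofactor]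

lemma blockA_solution_modEq_one {m k : ℕ} {x : Fin m × Fin k → ℤ}
    (hx : (blockA m k).mulVec x = (blockA m k).mulVec (fun _ => 1)) (i : Fin m) (r : Fin k) :
    x (i, r) ≡ 1 [ZMOD Nat.nth Nat.Prime r] := by
  have hrow : ∑ t, (primeCofactor k t : ℤ) * (x (i, t) - 1) = 0 := by
    have := congrFun hx i
    simp only [blockA_mulVec_apply, mul_one] at this
    simp only [mul_sub, sum_sub_distrib, mul_one, this, sub_self]
  have hp := Nat.prime_iff_prime_int.mp (Nat.prime_nth_prime r)
  rcases hp.dvd_or_dvd (dvd_mul_of_sum_mul_eq_zero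
      (fun t ht => Int.natCast_dvd_natCast.mpr (nth_prime_dvd_primeCofactor ht)) hrow) with h | h
  · exact absurd (Int.natCast_dvd_natCast.mp h) (nth_prime_not_dvd_primeCofactor r)
  · exact (Int.modEq_iff_dvd.mpr h).symm

/-- Every integer solution of `A x = b`, where `b = A · 1` is the sum of all columns of
the block matrix `A`, has all `n = km` entries nonzero. -/
theorem stmt15 {m k : ℕ} (x : Fin m × Fin k → ℤ)
    (hx : (blockA m k).mulVec x = (blockA m k).mulVec (fun _ => 1)) :
    ∀ j, x j ≠ 0 := by
  rintro ⟨i, r⟩ hxr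
  have h := blockA_solution_modEq_one hx i r
  rw [hxr, Int.modEq_iff_dvd, sub_zero] at h
  exact (Nat.prime_iff_prime_int.mp (Nat.prime_nth_prime r)).not_dvd_one h
end

section
/- Let A ∈ Z^{m×n} with full row rank and Hermite normal form AU = (D 0), U = (U_1 U_2) unimodular, U_2 ∈ Z^{n×(n-m)}. Then for any column-index set J ⊆ {1,...,n} with |J| = m, |det(A_{[m]×J})| = gcd(A) · |det((U_2)_{([n]\J)×[n-m]})|, where gcd(A) is the GCD of all m×m subdeterminants of A. -/
/-!
Write `A * U = (D 0)` as `A = D * W` with `W` the first `m` rows of `U⁻¹`. Every maximal minor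
of `A` is then `det D` times the corresponding minor of `W`. The maximal minors of `W` have gcd
`1`, since by multilinearity of the determinant they generate the ideal containing
`det (W * U₁) = 1`; hence `gcd(A) = |det D|`. Finally, Jacobi's complementary minor identity for
the unimodular pair `U⁻¹, U` equates `|det W_{[m]×J}|` with `|det (U₂)_{([n]∖J)×[n-m]}|`.
-/

open Matrix Function

theorem Function.Embedding.bijective_sumElim_of_range_eq_compl {α β γ : Type*} (e : α ↪ γ)
    (f : β ↪ γ) (hef : Set.range f = (Set.range e)ᶜ) : Bijective (Sum.elim e f) := by
  refine ⟨e.injective.sumElim f.injective fun a b hab => ?_, fun c => ?_⟩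
  · exact (hef ▸ Set.mem_range_self b : f b ∈ (Set.range e)ᶜ) ⟨a, hab⟩
  · by_cases hc : c ∈ Set.range e
    · obtain ⟨a, rfl⟩ := hc
      exact ⟨Sum.inl a, rfl⟩
    · obtain ⟨b, rfl⟩ := (hef ▸ hc : c ∈ Set.range f)
      exact ⟨Sum.inr b, rfl⟩

namespace Matrix

section Minors

variable {R : Type*} [CommRing R] {μ ι : Type*} [Fintype μ] [DecidableEq μ] [Fintype ι]

theorem det_mul_eq_sum_prod_mul_det_submatrix (M : Matrix μ ι R) (B : Matrix ι μ R) :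
    (M * B).det = ∑ r : μ → ι, (∏ c, B (r c) c) * (M.submatrix id r).det := by
  calc (M * B).det = detRowAlternating fun c => ∑ l, B l c • Mᵀ l := by
        rw [← det_transpose]
        congr 1
        funext c j
        simp [mul_apply, mul_comm]
    _ = ∑ r : μ → ι, detRowAlternating fun c => B (r c) c • Mᵀ (r c) :=
        detRowAlternating.toMultilinearMap.map_sum fun c l => B l c • Mᵀ l
    _ = ∑ r : μ → ι, (∏ c, B (r c) c) * (M.submatrix id r).det := by
        refine Finset.sum_congr rfl fun r _ => ?_
        rw [← smul_eq_mul, ← det_transpose (M.submatrix id r)]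
        exact detRowAlternating.toMultilinearMap.map_smul_univ _ _

noncomputable def maxMinorsGcd (M : Matrix μ ι ℤ) : ℕ :=
  Finset.univ.gcd fun e : μ ↪ ι => (M.submatrix id e).det.natAbs

theorem maxMinorsGcd_dvd_natAbs_det_mul (M : Matrix μ ι ℤ) (B : Matrix ι μ ℤ) :
    M.maxMinorsGcd ∣ (M * B).det.natAbs := by
  rw [← Int.natCast_dvd, det_mul_eq_sum_prod_mul_det_submatrix]
  refine Finset.dvd_sum fun r _ => Dvd.dvd.mul_left ?_ _
  by_cases hr : Injective r
  · exact Int.natCast_dvd.mpr (Finset.gcd_dvd (Finset.mem_univ (⟨r, hr⟩ : μ ↪ ι)))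
  · obtain ⟨c₁, c₂, hc, hne⟩ := not_injective_iff.mp hr
    rw [det_zero_of_column_eq hne fun i => by simp [hc]]
    exact dvd_zero _

theorem maxMinorsGcd_eq_one_of_mul_eq_one {M : Matrix μ ι ℤ} {B : Matrix ι μ ℤ}
    (h : M * B = 1) : M.maxMinorsGcd = 1 := by
  simpa [h] using M.maxMinorsGcd_dvd_natAbs_det_mul B

theorem maxMinorsGcd_mul_left (D : Matrix μ μ ℤ) (M : Matrix μ ι ℤ) :
    (D * M).maxMinorsGcd = D.det.natAbs * M.maxMinorsGcd := by
  simp_rw [maxMinorsGcd, submatrix_mul D M id id _ bijective_id, submatrix_id_id, det_mul,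
    Int.natAbs_mul]
  rw [Finset.gcd_mul_left, normalize_eq]

end Minors

theorem eq_mul_toRows₁_of_mul_eq_fromCols {R ι κ n : Type*} [Semiring R] [Fintype ι]
    [Fintype κ] [Fintype n] [DecidableEq n] {A : Matrix ι n R} {U : Matrix n (ι ⊕ κ) R}
    {V : Matrix (ι ⊕ κ) n R} {D : Matrix ι ι R} (hAU : A * U = fromCols D 0) (hUV : U * V = 1) :
    A = D * V.toRows₁ := by
  rw [← Matrix.mul_one A, ← hUV, ← Matrix.mul_assoc, hAU, ← fromRows_toRows V,
    fromCols_mul_fromRows, Matrix.zero_mul, add_zero, toRows₁_fromRows]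

section Complementary

variable {R : Type*} [CommRing R] {ι κ n : Type*} [Fintype ι] [Fintype κ] [Fintype n]
  [DecidableEq ι] [DecidableEq κ]

/-- Jacobi's complementary minor identity. Up to the reordering `g` of the rows of `U`,
`[[V_{ι,g ι}, V_{ι,g κ}], [0, 1]] * U = [[1, 0], [*, U_{g κ, κ}]]`. -/
theorem det_submatrix_inl_mul_det_eq_of_mul_eq_one [DecidableEq n] {V : Matrix (ι ⊕ κ) n R}
    {U : Matrix n (ι ⊕ κ) R} (hVU : V * U = 1) (g : ι ⊕ κ ≃ n) :
    (V.submatrix Sum.inl (g ∘ Sum.inl)).det * (U.submatrix g id).det =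
      (U.submatrix (g ∘ Sum.inr) Sum.inr).det := by
  have hblocks : fromBlocks (V.submatrix Sum.inl (g ∘ Sum.inl))
      (V.submatrix Sum.inl (g ∘ Sum.inr)) 0 1 =
        fromRows (V.submatrix Sum.inl g) ((1 : Matrix n n R).submatrix (g ∘ Sum.inr) g) := by
    ext (i | i) (j | j) <;> simp [one_apply]
  have hprod : fromRows (V.submatrix Sum.inl g) ((1 : Matrix n n R).submatrix (g ∘ Sum.inr) g) *
      U.submatrix g id =
        fromBlocks 1 0 (U.submatrix (g ∘ Sum.inr) Sum.inl) (U.submatrix (g ∘ Sum.inr) Sum.inr) := by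
    rw [fromRows_mul, submatrix_mul_equiv, submatrix_mul_equiv, hVU, Matrix.one_mul]
    ext (i | i) (j | j) <;> simp [one_apply]
  calc (V.submatrix Sum.inl (g ∘ Sum.inl)).det * (U.submatrix g id).det
      = (fromBlocks (V.submatrix Sum.inl (g ∘ Sum.inl)) (V.submatrix Sum.inl (g ∘ Sum.inr)) 0 1 *
          U.submatrix g id).det := by
        rw [det_mul, det_fromBlocks_zero₂₁, det_one, mul_one]
    _ = (U.submatrix (g ∘ Sum.inr) Sum.inr).det := by
        rw [hblocks, hprod, det_fromBlocks_zero₁₂, det_one, one_mul]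

theorem natAbs_det_toRows₁_submatrix_eq_of_mul_eq_one {V U : Matrix (ι ⊕ κ) (ι ⊕ κ) ℤ}
    (hVU : V * U = 1) (e : ι ↪ ι ⊕ κ) (f : κ ↪ ι ⊕ κ) (hef : Set.range f = (Set.range e)ᶜ) :
    (V.toRows₁.submatrix id e).det.natAbs = (U.submatrix f Sum.inr).det.natAbs := by
  let g := Equiv.ofBijective _ (e.bijective_sumElim_of_range_eq_compl f hef)
  have hU : U.det.natAbs = 1 :=
    Nat.eq_one_of_mul_eq_one_left (by rw [← Int.natAbs_mul, ← det_mul, hVU, det_one]; rfl)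
  have hJacobi := congrArg Int.natAbs (det_submatrix_inl_mul_det_eq_of_mul_eq_one hVU g)
  rwa [Int.natAbs_mul, det_permute, Int.natAbs_mul, Int.cast_id, Int.units_natAbs, hU, one_mul,
    mul_one] at hJacobi

end Complementary

end Matrix

theorem stmt19_general {m k : ℕ} (A : Matrix (Fin m) (Fin m ⊕ Fin k) ℤ)
    (U : Matrix (Fin m ⊕ Fin k) (Fin m ⊕ Fin k) ℤ) (hU : U.det = 1 ∨ U.det = -1)
    (D : Matrix (Fin m) (Fin m) ℤ)
    (hHNF : A * U = Matrix.fromCols D 0)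
    (e : Fin m ↪ (Fin m ⊕ Fin k)) (f : Fin k ↪ (Fin m ⊕ Fin k))
    (hef : Set.range f = (Set.range e)ᶜ) :
    ((A.submatrix id e).det).natAbs =
      (Finset.univ.gcd
          (fun e' : Fin m ↪ (Fin m ⊕ Fin k) => ((A.submatrix id e').det).natAbs)) *
        ((U.submatrix f Sum.inr).det).natAbs := by
  have hUunit : IsUnit U.det := by rcases hU with h | h <;> simp [h]
  have hVU : U⁻¹ * U = 1 := U.nonsing_inv_mul hUunit
  have hA : A = D * (U⁻¹).toRows₁ :=
    eq_mul_toRows₁_of_mul_eq_fromCols hHNF (U.mul_nonsing_inv hUunit)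
  have hW : (U⁻¹).toRows₁ * U.toCols₁ = 1 := by
    ext i j
    simpa [mul_apply, one_apply] using congr_fun₂ hVU (Sum.inl i) (Sum.inl j)
  change _ = A.maxMinorsGcd * _
  rw [hA, maxMinorsGcd_mul_left, maxMinorsGcd_eq_one_of_mul_eq_one hW, mul_one,
    submatrix_mul D _ id id e bijective_id, submatrix_id_id, det_mul, Int.natAbs_mul,
    natAbs_det_toRows₁_submatrix_eq_of_mul_eq_one hVU e f hef]

/-- With `A * U = (D 0)` a Hermite normal form (`U` unimodular, `D` lower triangular)
of a full-row-rank integer matrix `A` with columns indexed by `Fin m ⊕ Fin k`: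
for any set `J` of `m` column indices (the range of the embedding `e`), with
complementary rows given by the embedding `f`,
`|det A_{[m]×J}| = gcd(A) · |det (U₂)_{([n]∖J)×[n-m]}|`, where `U₂` consists of the
last `k` columns of `U` and `gcd(A)` is the GCD of all `m × m` subdeterminants of `A`. -/
theorem stmt19 {m k : ℕ} (A : Matrix (Fin m) (Fin m ⊕ Fin k) ℤ)
    (hrank : (A.map ((↑) : ℤ → ℚ)).rank = m)
    (U : Matrix (Fin m ⊕ Fin k) (Fin m ⊕ Fin k) ℤ) (hU : U.det = 1 ∨ U.det = -1)
    (D : Matrix (Fin m) (Fin m) ℤ) (hD : ∀ i j : Fin m, (i : ℕ) < (j : ℕ) → D i j = 0)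
    (hHNF : A * U = Matrix.fromCols D 0)
    (e : Fin m ↪ (Fin m ⊕ Fin k)) (f : Fin k ↪ (Fin m ⊕ Fin k))
    (hef : Set.range f = (Set.range e)ᶜ) :
    ((A.submatrix id e).det).natAbs =
      (Finset.univ.gcd
          (fun e' : Fin m ↪ (Fin m ⊕ Fin k) => ((A.submatrix id e').det).natAbs)) *
        ((U.submatrix f Sum.inr).det).natAbs :=
  stmt19_general A U hU D hHNF e f hef
end
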